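/- arXiv:2305.07873 — 2 statements merged into one kernel-verified Lean document; each statement's English description precedes it below -/
import Mathlib

section
/- The integral from 0 to 1 of x^2/sqrt(1-x^4) dx equals Γ(3/4)^2 / sqrt(2π). -/
/-!
Substituting `y = x ^ 4` turns the integral into `B(3/4, 1/2) / 4 = Γ(3/4) Γ(1/2) / (4 Γ(5/4))`.
Since `4 Γ(5/4) = Γ(1/4)` and the reflection formula gives `Γ(1/4) Γ(3/4) = π √2`, this equals
`Γ(3/4)² √π / (π √2) = Γ(3/4)² / √(2π)`.
-/

open Real MeasureTheory Set

theorem image_rpow_Ioo_zero_one {p : ℝ} (hp : 0 < p) :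
    (· ^ p) '' Ioo (0 : ℝ) 1 = Ioo 0 1 := by
  ext y
  constructor
  · rintro ⟨x, ⟨hx0, hx1⟩, rfl⟩
    exact ⟨rpow_pos_of_pos hx0 p, rpow_lt_one hx0.le hx1 hp⟩
  · rintro ⟨hy0, hy1⟩
    exact ⟨y ^ p⁻¹, ⟨rpow_pos_of_pos hy0 _, rpow_lt_one hy0.le hy1 (inv_pos.2 hp)⟩,
      by simp [← rpow_mul hy0.le, hp.ne']⟩

theorem integral_comp_rpow_Ioo_zero_one {E : Type*} [NormedAddCommGroup E] [NormedSpace ℝ E]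
    (g : ℝ → E) {p : ℝ} (hp : 0 < p) :
    ∫ x in Ioo 0 1, (p * x ^ (p - 1)) • g (x ^ p) = ∫ y in Ioo 0 1, g y := by
  have h := integral_image_eq_integral_abs_deriv_smul (measurableSet_Ioo (a := 0) (b := 1))
    (fun x hx ↦ (hasDerivAt_rpow_const (Or.inl hx.1.ne')).hasDerivWithinAt)
    ((rpow_left_injOn hp.ne').mono fun x hx ↦ hx.1.le) g
  rw [image_rpow_Ioo_zero_one hp] at h
  rw [h]
  refine setIntegral_congr_fun measurableSet_Ioo fun x hx ↦ ?_
  rw [abs_of_nonneg (mul_nonneg hp.le (rpow_nonneg hx.1.le _))]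

theorem integral_rpow_mul_one_sub_rpow_comp_rpow (a b : ℝ) {p : ℝ} (hp : 0 < p) :
    ∫ x in (0 : ℝ)..1, x ^ (p * a - 1) * (1 - x ^ p) ^ (b - 1) =
      p⁻¹ * ∫ y in (0 : ℝ)..1, y ^ (a - 1) * (1 - y) ^ (b - 1) := by
  simp only [intervalIntegral.integral_of_le zero_le_one, integral_Ioc_eq_integral_Ioo]
  rw [← integral_comp_rpow_Ioo_zero_one (fun y ↦ y ^ (a - 1) * (1 - y) ^ (b - 1)) hp,
    ← integral_const_mul]
  refine setIntegral_congr_fun measurableSet_Ioo fun x hx ↦ ?_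
  rw [smul_eq_mul, ← rpow_mul hx.1.le, ← mul_assoc, ← mul_assoc, inv_mul_cancel_left₀ hp.ne',
    ← rpow_add hx.1]
  ring_nf

theorem integral_rpow_mul_one_sub_rpow_eq_Gamma {a b : ℝ} (ha : 0 < a) (hb : 0 < b) :
    ∫ x in (0 : ℝ)..1, x ^ (a - 1) * (1 - x) ^ (b - 1) = Gamma a * Gamma b / Gamma (a + b) := by
  apply Complex.ofReal_injective
  push_cast [← intervalIntegral.integral_ofReal, ← Complex.Gamma_ofReal]
  rw [← Complex.betaIntegral_eq_Gamma_mul_div a b (by simpa) (by simpa), Complex.betaIntegral]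
  refine intervalIntegral.integral_congr fun x hx ↦ ?_
  rw [uIcc_of_le zero_le_one] at hx
  push_cast [Complex.ofReal_cpow hx.1, Complex.ofReal_cpow (sub_nonneg.2 hx.2)]
  rfl

theorem Gamma_one_quarter_mul_Gamma_three_quarters :
    Gamma (1 / 4) * Gamma (3 / 4) = √2 * π := by
  have h := Gamma_mul_Gamma_one_sub (1 / 4)
  rw [show (1 : ℝ) - 1 / 4 = 3 / 4 by norm_num, show π * (1 / 4) = π / 4 by ring,
    sin_pi_div_four] at h
  rw [h, div_div_eq_mul_div, div_eq_iff (by positivity)]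
  linear_combination (-π) * sq_sqrt (zero_le_two (α := ℝ))

theorem Gamma_five_quarters : Gamma (5 / 4) = Gamma (1 / 4) / 4 := by
  rw [show (5 / 4 : ℝ) = 1 / 4 + 1 by norm_num, Gamma_add_one (by norm_num)]
  ring

theorem stmt_3 :
    (∫ x in (0:ℝ)..1, x^2 / Real.sqrt (1 - x^4)) =
      (Real.Gamma (3/4))^2 / Real.sqrt (2 * π) := by
  have hintegrand : ∀ x ∈ uIcc (0 : ℝ) 1, x ^ 2 / √(1 - x ^ 4) =
      x ^ ((4 : ℝ) * (3 / 4) - 1) * (1 - x ^ (4 : ℝ)) ^ ((1 / 2 : ℝ) - 1) := by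
    intro x hx
    rw [uIcc_of_le zero_le_one] at hx
    have : 0 ≤ 1 - x ^ 4 := sub_nonneg.2 (pow_le_one₀ hx.1 hx.2)
    norm_num [rpow_neg this, sqrt_eq_rpow, div_eq_mul_inv]
  rw [intervalIntegral.integral_congr hintegrand,
    integral_rpow_mul_one_sub_rpow_comp_rpow _ _ four_pos,
    integral_rpow_mul_one_sub_rpow_eq_Gamma (by norm_num) (by norm_num), Gamma_one_half_eq,
    show (3 / 4 + 1 / 2 : ℝ) = 5 / 4 by norm_num, Gamma_five_quarters, sqrt_mul zero_le_two]
  have hΓ : 0 < Gamma (1 / 4) := Gamma_pos_of_pos (by norm_num)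
  have hπ : 0 < √π := sqrt_pos.2 pi_pos
  field_simp
  linear_combination √2 * sq_sqrt pi_pos.le - Gamma_one_quarter_mul_Gamma_three_quarters
end

section
/- The Mercator projection of the spherical interception curve is the graph of y = ln(coth(x/2)) for x > 0, and this function is an involution: if f(x) = ln(coth(x/2)) then f(f(x)) = x for all x > 0. -/
open Real

/-- The hyperbolic cotangent. -/
noncomputable def coth (x : ℝ) : ℝ := Real.cosh x / Real.sinh x

lemma coth_half (x : ℝ) (hx : 0 < x) :
    coth (x/2) = (Real.exp x + 1) / (Real.exp x - 1) := by
  have h1 : Real.exp (x/2) * Real.exp (x/2) = Real.exp x := by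
    rw [← Real.exp_add]; ring_nf
  have h2 : Real.exp (x/2) > 0 := Real.exp_pos _
  have h3 : Real.exp x > 1 := by
    rw [show (1:ℝ) = Real.exp 0 by simp]; exact Real.exp_lt_exp.mpr hx
  have hs : 0 < Real.sinh (x/2) := by
    rw [Real.sinh_eq, Real.exp_neg]
    have : Real.exp (-(x/2)) < Real.exp (x/2) := Real.exp_lt_exp.mpr (by linarith)
    rw [Real.exp_neg] at this
    linarith
  rw [coth, Real.cosh_eq, Real.sinh_eq]
  rw [Real.exp_neg]
  rw [div_eq_div_iff (by rw [Real.sinh_eq, Real.exp_neg] at hs; linarith) (by linarith)]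
  field_simp
  nlinarith [h1, h2]

lemma key (x : ℝ) (hx : 0 < x) :
    Real.log (coth (x/2)) = Real.log ((Real.exp x + 1) / (Real.exp x - 1)) ∧
    0 < Real.log (coth (x/2)) := by
  have h3 : Real.exp x > 1 := by
    rw [show (1:ℝ) = Real.exp 0 by simp]; exact Real.exp_lt_exp.mpr hx
  rw [coth_half x hx]
  refine ⟨rfl, Real.log_pos ?_⟩
  rw [lt_div_iff₀ (by linarith)]
  linarith

theorem stmt_16 (f : ℝ → ℝ) (hf : ∀ x, f x = Real.log (coth (x/2))) :
    ∀ x : ℝ, 0 < x → f (f x) = x := by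
  intro x hx
  have h3 : Real.exp x > 1 := by
    rw [show (1:ℝ) = Real.exp 0 by simp]; exact Real.exp_lt_exp.mpr hx
  obtain ⟨heq, hpos⟩ := key x hx
  have hfx : f x = Real.log ((Real.exp x + 1) / (Real.exp x - 1)) := by
    rw [hf]; exact heq
  have hfxpos : 0 < f x := by rw [hf]; exact hpos
  obtain ⟨heq2, _⟩ := key (f x) hfxpos
  have hexp : Real.exp (f x) = (Real.exp x + 1) / (Real.exp x - 1) := by
    rw [hfx, Real.exp_log]
    apply div_pos <;> linarith
  have hne : Real.exp x - 1 ≠ 0 := by linarith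
  rw [hf (f x), heq2, hexp]
  have hden : (Real.exp x + 1) / (Real.exp x - 1) - 1 = 2 / (Real.exp x - 1) := by
    field_simp [hne]; ring
  have hnum : (Real.exp x + 1) / (Real.exp x - 1) + 1 = 2 * Real.exp x / (Real.exp x - 1) := by
    field_simp [hne]; ring
  rw [hnum, hden]
  have : 2 * Real.exp x / (Real.exp x - 1) / (2 / (Real.exp x - 1)) = Real.exp x := by
    field_simp [hne]
  rw [this, Real.log_exp]
end
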